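/- arXiv:2308.06785 — 4 statements merged into one kernel-verified Lean document; each statement's English description precedes it below -/
import Mathlib

section
/- Let x₀ ∈ ℝ, v ≥ 0, a ≥ 0, τ ≥ 0, b > 0 and c ∈ ℝ, and let atb : ℝ → ℝ be the accelerate-then-brake trajectory with data (x₀, v, a, τ, b). Then (∀ t ≥ 0, atb(t) < c) if and only if x₀ + v·τ + (a/2)·τ² + (v + a·τ)²/(2b) < c. In particular, a vehicle that cruises at speed v for the response time ρ and then brakes at rate b (the case a = 0, τ = ρ) stays strictly before an obstacle or collision-zone boundary at position c at all times if and only if x₀ + v·ρ + v²/(2b) < c. -/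
/-! The stopping position `x₁ + v₁² / (2b)` is the maximum of `atb` on `[0, ∞)`: the accelerating phase
is increasing, the braking phase stays below it by completing the square, and it is attained once
the vehicle has come to rest. -/

/-- The accelerate-then-brake trajectory: position at time `t` of a vehicle
starting at `x₀` with speed `v`, accelerating at rate `a` for time `τ`,
then braking at rate `b` until stopped, remaining stopped afterwards. -/
noncomputable def atb (x₀ v a τ b : ℝ) (t : ℝ) : ℝ :=
  if t ≤ τ then x₀ + v * t + (a / 2) * t ^ 2
  else if t ≤ τ + (v + a * τ) / b then
    (x₀ + v * τ + (a / 2) * τ ^ 2) + (v + a * τ) * (t - τ) - (b / 2) * (t - τ) ^ 2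
  else (x₀ + v * τ + (a / 2) * τ ^ 2) + (v + a * τ) ^ 2 / (2 * b)

noncomputable def atbStop (x₀ v a τ b : ℝ) : ℝ :=
  x₀ + v * τ + (a / 2) * τ ^ 2 + (v + a * τ) ^ 2 / (2 * b)

-- `u² / (2b) - (u s - b s² / 2) = (b s - u)² / (2b)`.
theorem mul_sub_half_mul_sq_le_sq_div {u b : ℝ} (hb : 0 < b) (s : ℝ) :
    u * s - (b / 2) * s ^ 2 ≤ u ^ 2 / (2 * b) := by
  rw [le_div_iff₀ (by positivity)]
  nlinarith [sq_nonneg (b * s - u)]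

section

variable {x₀ v a τ b t : ℝ}

theorem atb_eq_atbStop (hv : 0 ≤ v) (ha : 0 ≤ a) (hτ : 0 ≤ τ) (hb : 0 < b)
    (ht : τ + (v + a * τ) / b < t) : atb x₀ v a τ b t = atbStop x₀ v a τ b := by
  have : 0 ≤ (v + a * τ) / b := by positivity
  rw [atb, if_neg (by linarith), if_neg ht.not_ge, atbStop]

theorem atb_le_atbStop (hv : 0 ≤ v) (ha : 0 ≤ a) (hb : 0 < b) (ht : 0 ≤ t) :
    atb x₀ v a τ b t ≤ atbStop x₀ v a τ b := by
  have hbrake := mul_sub_half_mul_sq_le_sq_div (u := v + a * τ) hb (t - τ)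
  have hrest : 0 ≤ (v + a * τ) ^ 2 / (2 * b) := by positivity
  unfold atb atbStop
  split_ifs with hacc hbr
  · have : x₀ + v * t + (a / 2) * t ^ 2 ≤ x₀ + v * τ + (a / 2) * τ ^ 2 := by gcongr
    linarith
  · linarith
  · exact le_rfl

end

theorem atb_lt_iff_worst_case_stop_lt (x₀ v a τ b c : ℝ)
    (hv : 0 ≤ v) (ha : 0 ≤ a) (hτ : 0 ≤ τ) (hb : 0 < b) :
    (∀ t : ℝ, 0 ≤ t → atb x₀ v a τ b t < c) ↔
      x₀ + v * τ + (a / 2) * τ ^ 2 + (v + a * τ) ^ 2 / (2 * b) < c := by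
  refine ⟨fun h => ?_, fun h t ht => (atb_le_atbStop hv ha hb ht).trans_lt h⟩
  have hstop : 0 ≤ τ + (v + a * τ) / b := by positivity
  rw [← atbStop, ← atb_eq_atbStop (t := τ + (v + a * τ) / b + 1) hv ha hτ hb (by linarith)]
  exact h _ (by linarith)
end

section
/- Let b > 0 and v ≥ 0, and let w : ℝ → ℝ be differentiable on [0,∞) with w(0) = v, w(t) ≥ 0 for every t ≥ 0, and w′(t) ≥ −b for every t ≥ 0 at which w(t) > 0. Then for every t with 0 ≤ t ≤ v/b one has w(t) ≥ v − b·t. -/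
open Set

/-- An interior zero of a nonnegative function is a local minimum, so the derivative vanishes
there and satisfies any bound `C ≤ 0`. -/
theorem le_deriv_of_nonneg_of_le_deriv_of_pos {w : ℝ → ℝ} {s : Set ℝ} {C : ℝ} (hC : C ≤ 0)
    (hnonneg : ∀ t ∈ s, 0 ≤ w t) (hderiv : ∀ t ∈ s, 0 < w t → C ≤ deriv w t) :
    ∀ t ∈ interior s, C ≤ deriv w t := by
  intro t ht
  rcases (hnonneg t (interior_subset ht)).lt_or_eq with hpos | hzero
  · exact hderiv t (interior_subset ht) hpos
  · have hmin : IsLocalMin w t := by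
      filter_upwards [mem_interior_iff_mem_nhds.mp ht] with x hx
      exact hzero ▸ hnonneg x hx
    exact hmin.deriv_eq_zero ▸ hC

theorem velocity_ge_uniform_braking_general (b v : ℝ) (hb : 0 < b)
    (w : ℝ → ℝ)
    (hdiff : ∀ t : ℝ, 0 ≤ t → DifferentiableAt ℝ w t)
    (hw0 : w 0 = v)
    (hnonneg : ∀ t : ℝ, 0 ≤ t → 0 ≤ w t)
    (hderiv : ∀ t : ℝ, 0 ≤ t → 0 < w t → -b ≤ deriv w t) :
    ∀ t : ℝ, 0 ≤ t → t ≤ v / b → v - b * t ≤ w t := by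
  intro t ht _
  have hderiv_ge : ∀ u ∈ interior (Ici (0 : ℝ)), -b ≤ deriv w u :=
    le_deriv_of_nonneg_of_le_deriv_of_pos (neg_nonpos.mpr hb.le) hnonneg hderiv
  have hcont : ContinuousOn w (Ici 0) := fun u hu => (hdiff u hu).continuousAt.continuousWithinAt
  have hdiffOn : DifferentiableOn ℝ w (interior (Ici 0)) := fun u hu =>
    (hdiff u (interior_subset hu)).differentiableWithinAt
  have hmvt := (convex_Ici 0).mul_sub_le_image_sub_of_le_deriv hcont hdiffOn hderiv_ge
    0 self_mem_Ici t ht ht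
  rw [hw0] at hmvt
  linarith

theorem velocity_ge_uniform_braking (b v : ℝ) (hb : 0 < b) (hv : 0 ≤ v)
    (w : ℝ → ℝ)
    (hdiff : ∀ t : ℝ, 0 ≤ t → DifferentiableAt ℝ w t)
    (hw0 : w 0 = v)
    (hnonneg : ∀ t : ℝ, 0 ≤ t → 0 ≤ w t)
    (hderiv : ∀ t : ℝ, 0 ≤ t → 0 < w t → -b ≤ deriv w t) :
    ∀ t : ℝ, 0 ≤ t → t ≤ v / b → v - b * t ≤ w t :=
  velocity_ge_uniform_braking_general b v hb w hdiff hw0 hnonneg hderiv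
end

section
/- Let x₀ ∈ ℝ, v ≥ 0, a ≥ 0, ρ ≥ 0 and b > 0, and let x, w : ℝ → ℝ be such that x(0) = x₀, w(0) = v, for every t ≥ 0 the function x has derivative w(t) at t, w is differentiable on [0,∞), w(t) ≥ 0 for every t ≥ 0, w′(t) ≤ a for every t ∈ [0, ρ], and w′(t) ≤ −b for every t > ρ at which w(t) > 0. Then for every t ≥ 0, x(t) ≤ atb(t), where atb is the accelerate-then-brake trajectory with data (x₀, v, a, ρ, b). -/
open Set

section Atb

variable {x₀ v a τ b t : ℝ}

theorem atb_of_le (ht : t ≤ τ) : atb x₀ v a τ b t = x₀ + v * t + a / 2 * t ^ 2 :=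
  if_pos ht

theorem atb_of_le_of_le (hτ : τ ≤ t) (ht : t ≤ τ + (v + a * τ) / b) :
    atb x₀ v a τ b t =
      x₀ + v * τ + a / 2 * τ ^ 2 + (v + a * τ) * (t - τ) - b / 2 * (t - τ) ^ 2 := by
  rcases hτ.eq_or_lt with rfl | hτ
  · rw [atb, if_pos le_rfl]
    ring
  · rw [atb, if_neg hτ.not_ge, if_pos ht]

theorem atb_of_lt (hτ : τ < t) (ht : τ + (v + a * τ) / b < t) :
    atb x₀ v a τ b t = x₀ + v * τ + a / 2 * τ ^ 2 + (v + a * τ) ^ 2 / (2 * b) := by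
  rw [atb, if_neg hτ.not_ge, if_neg ht.not_ge]

end Atb

theorem sub_le_of_hasDerivAt_le_affine {x w : ℝ → ℝ} {p q c k : ℝ} (hpq : p ≤ q)
    (hx : ∀ u ∈ Icc p q, HasDerivAt x (w u) u)
    (hw : ∀ u ∈ Ioo p q, w u ≤ c + k * (u - p)) :
    x q - x p ≤ c * (q - p) + k / 2 * (q - p) ^ 2 := by
  have hquad :
      ∀ u, HasDerivAt (fun u => c * (u - p) + k / 2 * (u - p) ^ 2) (c + k * (u - p)) u := by
    intro u
    have h := (hasDerivAt_id' u).sub_const p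
    exact ((h.const_mul c).add ((h.pow 2).const_mul (k / 2))).congr_deriv (by ring)
  have hmono : MonotoneOn (fun u => c * (u - p) + k / 2 * (u - p) ^ 2 - x u) (Icc p q) := by
    refine monotoneOn_of_hasDerivWithinAt_nonneg (f' := fun u => c + k * (u - p) - w u)
      (convex_Icc p q) ?_ ?_ ?_
    · exact (continuous_iff_continuousAt.2 fun u => (hquad u).continuousAt).continuousOn.sub
        fun u hu => (hx u hu).continuousAt.continuousWithinAt
    · rw [interior_Icc]
      exact fun u hu => ((hquad u).sub (hx u (Ioo_subset_Icc_self hu))).hasDerivWithinAt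
    · rw [interior_Icc]
      exact fun u hu => sub_nonneg.2 (hw u hu)
  have := hmono (left_mem_Icc.2 hpq) (right_mem_Icc.2 hpq) hpq
  simp only [sub_self, mul_zero, zero_pow two_ne_zero, add_zero, zero_sub] at this
  linarith

theorem le_sub_mul_of_deriv_le_neg_of_pos {w : ℝ → ℝ} {p q b : ℝ} (hb : 0 ≤ b)
    (hpq : p ≤ q) (hd : ∀ u ∈ Icc p q, DifferentiableAt ℝ w u)
    (hnonneg : ∀ u ∈ Icc p q, 0 ≤ w u)
    (hder : ∀ u ∈ Ioo p q, 0 < w u → deriv w u ≤ -b) (hq : 0 < w q) :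
    w q ≤ w p - b * (q - p) := by
  have hcont : ContinuousOn w (Icc p q) := fun u hu =>
    (hd u hu).continuousAt.continuousWithinAt
  have hsub : {p} ∪ Icc p q ∩ w ⁻¹' {0} ⊆ Icc p q :=
    union_subset (singleton_subset_iff.2 (left_mem_Icc.2 hpq)) inter_subset_left
  have hcompact : IsCompact ({p} ∪ Icc p q ∩ w ⁻¹' {0}) :=
    isCompact_Icc.of_isClosed_subset (isClosed_singleton.union
      (hcont.preimage_isClosed_of_isClosed isClosed_Icc isClosed_singleton)) hsub
  -- `s` is the last zero of `w` in `[p, q]`, or `p` if there is none.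
  obtain ⟨s, hs, hlast⟩ := hcompact.exists_isGreatest ⟨p, Or.inl rfl⟩
  have hsq : s ∈ Icc p q := hsub hs
  have hpos : ∀ u ∈ Ioo s q, 0 < w u := fun u hu =>
    (hnonneg u ⟨hsq.1.trans hu.1.le, hu.2.le⟩).lt_of_ne' fun hwu =>
      hu.1.not_ge (hlast (Or.inr ⟨⟨hsq.1.trans hu.1.le, hu.2.le⟩, hwu⟩))
  have hbrake := sub_le_of_hasDerivAt_le_affine (c := -b) (k := 0) hsq.2
    (fun u hu => (hd u ⟨hsq.1.trans hu.1, hu.2⟩).hasDerivAt)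
    (fun u hu => by simpa using hder u ⟨hsq.1.trans_lt hu.1, hu.2⟩ (hpos u hu))
  rcases hs with rfl | ⟨-, hws⟩
  · linarith
  · linarith [mul_nonneg hb (sub_nonneg.2 hsq.2), show w s = 0 from hws]

structure IsProperResponse (v a ρ b : ℝ) (w : ℝ → ℝ) : Prop where
  init : w 0 = v
  differentiableAt : ∀ t, 0 ≤ t → DifferentiableAt ℝ w t
  nonneg : ∀ t, 0 ≤ t → 0 ≤ w t
  deriv_le_accel : ∀ t, 0 ≤ t → t ≤ ρ → deriv w t ≤ a
  deriv_le_brake : ∀ t, ρ < t → 0 < w t → deriv w t ≤ -b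

namespace IsProperResponse

variable {v a ρ b t : ℝ} {w : ℝ → ℝ}

theorem le_accel (h : IsProperResponse v a ρ b w) (ht : 0 ≤ t) (htρ : t ≤ ρ) :
    w t ≤ v + a * t := by
  have := sub_le_of_hasDerivAt_le_affine (c := a) (k := 0) ht
    (fun u hu => (h.differentiableAt u hu.1).hasDerivAt)
    (fun u hu => by simpa using h.deriv_le_accel u hu.1.le (hu.2.le.trans htρ))
  rw [h.init] at this
  linarith

theorem le_brake (h : IsProperResponse v a ρ b w) (hρ : 0 ≤ ρ) (hb : 0 ≤ b) (hρt : ρ ≤ t)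
    (ht : 0 < w t) : w t ≤ v + a * ρ - b * (t - ρ) := by
  have := le_sub_mul_of_deriv_le_neg_of_pos hb hρt
    (fun u hu => h.differentiableAt u (hρ.trans hu.1)) (fun u hu => h.nonneg u (hρ.trans hu.1))
    (fun u hu => h.deriv_le_brake u hu.1) ht
  linarith [h.le_accel hρ le_rfl]

theorem le_brake_of_le_stop (h : IsProperResponse v a ρ b w) (hρ : 0 ≤ ρ) (hb : 0 < b)
    (hρt : ρ ≤ t) (ht : t ≤ ρ + (v + a * ρ) / b) : w t ≤ v + a * ρ - b * (t - ρ) := by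
  rcases (h.nonneg t (hρ.trans hρt)).lt_or_eq with hpos | hzero
  · exact h.le_brake hρ hb.le hρt hpos
  · rw [← hzero, sub_nonneg]
    exact (le_div_iff₀' hb).1 (by linarith)

theorem eq_zero_of_stop_lt (h : IsProperResponse v a ρ b w) (hρ : 0 ≤ ρ) (hb : 0 < b)
    (hρt : ρ ≤ t) (ht : ρ + (v + a * ρ) / b < t) : w t = 0 := by
  refine (h.nonneg t (hρ.trans hρt)).eq_or_lt'.resolve_right fun hpos => ?_
  have := h.le_brake hρ hb.le hρt hpos
  linarith [(div_lt_iff₀' hb).1 (lt_sub_iff_add_lt'.2 ht)]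

theorem le_stop_time (h : IsProperResponse v a ρ b w) (hρ : 0 ≤ ρ) (hb : 0 < b) :
    ρ ≤ ρ + (v + a * ρ) / b :=
  le_add_of_nonneg_right (div_nonneg ((h.nonneg ρ hρ).trans (h.le_accel hρ le_rfl)) hb.le)

variable {x : ℝ → ℝ}

theorem position_sub_le_accel (h : IsProperResponse v a ρ b w)
    (hx : ∀ t, 0 ≤ t → HasDerivAt x (w t) t) (ht : 0 ≤ t) (htρ : t ≤ ρ) :
    x t - x 0 ≤ v * t + a / 2 * t ^ 2 := by
  simpa using sub_le_of_hasDerivAt_le_affine (c := v) (k := a) ht (fun u hu => hx u hu.1)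
    fun u hu => by simpa using h.le_accel hu.1.le (hu.2.le.trans htρ)

theorem position_sub_le_brake (h : IsProperResponse v a ρ b w)
    (hx : ∀ t, 0 ≤ t → HasDerivAt x (w t) t) (hρ : 0 ≤ ρ) (hb : 0 < b) (hρt : ρ ≤ t)
    (ht : t ≤ ρ + (v + a * ρ) / b) :
    x t - x ρ ≤ (v + a * ρ) * (t - ρ) - b / 2 * (t - ρ) ^ 2 := by
  have := sub_le_of_hasDerivAt_le_affine (c := v + a * ρ) (k := -b) hρt
    (fun u hu => hx u (hρ.trans hu.1))
    fun u hu => by simpa [← sub_eq_add_neg] using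
      h.le_brake_of_le_stop hρ hb hu.1.le (hu.2.le.trans ht)
  linarith

theorem position_le_of_stop_le (h : IsProperResponse v a ρ b w)
    (hx : ∀ t, 0 ≤ t → HasDerivAt x (w t) t) (hρ : 0 ≤ ρ) (hb : 0 < b)
    (ht : ρ + (v + a * ρ) / b ≤ t) : x t ≤ x (ρ + (v + a * ρ) / b) := by
  have hρT := h.le_stop_time hρ hb
  have := sub_le_of_hasDerivAt_le_affine (c := 0) (k := 0) ht
    (fun u hu => hx u (hρ.trans (hρT.trans hu.1)))
    fun u hu => (h.eq_zero_of_stop_lt hρ hb (hρT.trans hu.1.le) hu.1).le.trans (by simp)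
  linarith

end IsProperResponse

theorem position_le_accel_then_brake_general (x₀ v a ρ b : ℝ)
    (hρ : 0 ≤ ρ) (hb : 0 < b)
    (x w : ℝ → ℝ)
    (hx0 : x 0 = x₀) (hw0 : w 0 = v)
    (hx : ∀ t : ℝ, 0 ≤ t → HasDerivAt x (w t) t)
    (hdiff : ∀ t : ℝ, 0 ≤ t → DifferentiableAt ℝ w t)
    (hnonneg : ∀ t : ℝ, 0 ≤ t → 0 ≤ w t)
    (hderiv₁ : ∀ t : ℝ, 0 ≤ t → t ≤ ρ → deriv w t ≤ a)
    (hderiv₂ : ∀ t : ℝ, ρ < t → 0 < w t → deriv w t ≤ -b) :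
    ∀ t : ℝ, 0 ≤ t → x t ≤ atb x₀ v a ρ b t := by
  intro t ht
  have hw : IsProperResponse v a ρ b w := ⟨hw0, hdiff, hnonneg, hderiv₁, hderiv₂⟩
  subst hx0
  rcases le_or_gt t ρ with htρ | hρt
  · rw [atb_of_le htρ]
    linarith [hw.position_sub_le_accel hx ht htρ]
  have haccel := hw.position_sub_le_accel hx hρ le_rfl
  rcases le_or_gt t (ρ + (v + a * ρ) / b) with htT | hTt
  · rw [atb_of_le_of_le hρt.le htT]
    linarith [hw.position_sub_le_brake hx hρ hb hρt.le htT]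
  · have hbrake := hw.position_sub_le_brake hx hρ hb (hw.le_stop_time hρ hb) le_rfl
    rw [add_sub_cancel_left] at hbrake
    have hbraking_distance :
        (v + a * ρ) * ((v + a * ρ) / b) - b / 2 * ((v + a * ρ) / b) ^ 2 =
          (v + a * ρ) ^ 2 / (2 * b) := by
      field_simp
      ring
    rw [atb_of_lt hρt hTt]
    linarith [hw.position_le_of_stop_le hx hρ hb hTt.le]

theorem position_le_accel_then_brake (x₀ v a ρ b : ℝ)
    (hv : 0 ≤ v) (ha : 0 ≤ a) (hρ : 0 ≤ ρ) (hb : 0 < b)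
    (x w : ℝ → ℝ)
    (hx0 : x 0 = x₀) (hw0 : w 0 = v)
    (hx : ∀ t : ℝ, 0 ≤ t → HasDerivAt x (w t) t)
    (hdiff : ∀ t : ℝ, 0 ≤ t → DifferentiableAt ℝ w t)
    (hnonneg : ∀ t : ℝ, 0 ≤ t → 0 ≤ w t)
    (hderiv₁ : ∀ t : ℝ, 0 ≤ t → t ≤ ρ → deriv w t ≤ a)
    (hderiv₂ : ∀ t : ℝ, ρ < t → 0 < w t → deriv w t ≤ -b) :
    ∀ t : ℝ, 0 ≤ t → x t ≤ atb x₀ v a ρ b t :=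
  position_le_accel_then_brake_general x₀ v a ρ b hρ hb x w hx0 hw0 hx hdiff hnonneg hderiv₁ hderiv₂
end

section
/- Let x₀ ∈ ℝ, v ≥ 0, a ≥ 0, τ ≥ 0, b > 0, and let atb be the accelerate-then-brake trajectory with data (x₀, v, a, τ, b). If c > x₀ + v·τ + (a/2)·τ² + (v + a·τ)²/(2b) is NOT satisfied — i.e., if x₀ + v·τ + (a/2)·τ² + (v + a·τ)²/(2b) ≥ c — then there exists t ≥ 0 with atb(t) ≥ c. Conversely, if x₀ + v·τ + (a/2)·τ² + (v + a·τ)²/(2b) < c then atb(t) < c for all t ≥ 0. Hence the condition 'worst-case stopping position before c' is both sufficient and necessary for the accelerate-then-brake maneuver to keep the vehicle strictly before position c at all times. -/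
lemma accel_position_le {x₀ v a t τ : ℝ} (hv : 0 ≤ v) (ha : 0 ≤ a) (ht : 0 ≤ t) (htτ : t ≤ τ) :
    x₀ + v * t + (a / 2) * t ^ 2 ≤ x₀ + v * τ + (a / 2) * τ ^ 2 := by
  have hsq : t ^ 2 ≤ τ ^ 2 := pow_le_pow_left₀ ht htτ 2
  gcongr

lemma braking_displacement_le (v₁ b s : ℝ) (hb : 0 < b) :
    v₁ * s - (b / 2) * s ^ 2 ≤ v₁ ^ 2 / (2 * b) := by
  have hgap : v₁ ^ 2 / (2 * b) - (v₁ * s - (b / 2) * s ^ 2) = (b * s - v₁) ^ 2 / (2 * b) := by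
    field_simp
    ring
  have : 0 ≤ (b * s - v₁) ^ 2 / (2 * b) := by positivity
  linarith

lemma braking_displacement_at_stop (v₁ : ℝ) {b : ℝ} (hb : b ≠ 0) :
    v₁ * (v₁ / b) - (b / 2) * (v₁ / b) ^ 2 = v₁ ^ 2 / (2 * b) := by
  field_simp
  ring

section

variable {x₀ v a τ b : ℝ}

lemma atb_le_stopping_position (hv : 0 ≤ v) (ha : 0 ≤ a) (hb : 0 < b) {t : ℝ} (ht : 0 ≤ t) :
    atb x₀ v a τ b t ≤ x₀ + v * τ + (a / 2) * τ ^ 2 + (v + a * τ) ^ 2 / (2 * b) := by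
  unfold atb
  split_ifs with hacc hbrake
  · have : 0 ≤ (v + a * τ) ^ 2 / (2 * b) := by positivity
    linarith [accel_position_le (x₀ := x₀) hv ha ht hacc]
  · linarith [braking_displacement_le (v + a * τ) b (t - τ) hb]
  · exact le_rfl

lemma atb_at_stop_time (hv : 0 ≤ v) (ha : 0 ≤ a) (hτ : 0 ≤ τ) (hb : 0 < b) :
    atb x₀ v a τ b (τ + (v + a * τ) / b) =
      x₀ + v * τ + (a / 2) * τ ^ 2 + (v + a * τ) ^ 2 / (2 * b) := by
  have hv₁ : 0 ≤ v + a * τ := by positivity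
  unfold atb
  rcases hv₁.eq_or_lt with hrest | hmoving
  · simp [← hrest]
  · have : 0 < (v + a * τ) / b := div_pos hmoving hb
    rw [if_neg (by linarith), if_pos le_rfl, add_sub_cancel_left, add_sub_assoc,
      braking_displacement_at_stop _ hb.ne']

end

theorem atb_worst_case_condition_exact (x₀ v a τ b c : ℝ)
    (hv : 0 ≤ v) (ha : 0 ≤ a) (hτ : 0 ≤ τ) (hb : 0 < b) :
    ((x₀ + v * τ + (a / 2) * τ ^ 2 + (v + a * τ) ^ 2 / (2 * b) ≥ c) →
      ∃ t : ℝ, 0 ≤ t ∧ atb x₀ v a τ b t ≥ c) ∧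
    ((x₀ + v * τ + (a / 2) * τ ^ 2 + (v + a * τ) ^ 2 / (2 * b) < c) →
      ∀ t : ℝ, 0 ≤ t → atb x₀ v a τ b t < c) := by
  refine ⟨fun hc => ⟨τ + (v + a * τ) / b, by positivity, ?_⟩,
    fun hc t ht => (atb_le_stopping_position hv ha hb ht).trans_lt hc⟩
  rw [atb_at_stop_time hv ha hτ hb]
  exact hc
end
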